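/- Let C ⊂ X × X be a correspondence with projections x, y: C → X, and suppose D has an m-th CIP D^{(m)} with intermediate divisors L_0 = D, L_1, ..., L_m = D^{(m)} satisfying y^*L_{i−1} = x^*L_i. Let 𝒫 be the path space with maps π, σ, ε satisfying π = x∘ε and π∘σ = y∘ε. Then for every place v and every n ≥ m, λ_v(D, π(σ^{(n)}(Q))) = λ_v(D^{(m)}, π(σ^{(n−m)}(Q))) + O(1) for all Q ∈ 𝒫 for which both sides are defined, with the O(1) independent of Q and n. -/

import Mathlib

/-- The path space of a correspondence `C ⊆ X × X`. -/
def PathSpace {X : Type*} (C : Set (X × X)) : Type _ :=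
  {P : ℕ → X // ∀ i, (P i, P (i + 1)) ∈ C}

/-- The shift map on the path space. -/
def pathShift {X : Type*} (C : Set (X × X)) : PathSpace C → PathSpace C :=
  fun P => ⟨fun i => P.1 (i + 1), fun i => P.2 (i + 1)⟩

/-!
Each relation `y^*L_{i-1} = x^*L_i` lets one trade `λ_v(L_{i-1}, P_{k+1})` for
`λ_v(L_i, P_k)` along an edge `(P_k, P_{k+1}) ∈ C`, at the cost of the two functoriality
constants, since both are `λ_v` of the same divisor on `C` up to `O(1)`. Telescoping these
`m` trades along the path gives the claim with a constant depending only on `v` and the `L_i`.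
-/

theorem pathShift_iterate_apply {X : Type*} (C : Set (X × X)) (k : ℕ) (Q : PathSpace C)
    (i : ℕ) : ((pathShift C)^[k] Q).1 i = Q.1 (i + k) := by
  induction k generalizing Q i with
  | zero => rfl
  | succ k ih =>
    rw [Function.iterate_succ_apply, ih]
    exact congrArg Q.1 (by omega)

theorem abs_sub_le_sum_of_abs_sub_succ_le {g : ℕ → ℕ → ℝ} {c : ℕ → ℝ} {m : ℕ}
    (h : ∀ i < m, ∀ k, |g i (k + 1) - g (i + 1) k| ≤ c i) :
    ∀ j ≤ m, ∀ k, |g 0 (k + j) - g j k| ≤ ∑ i ∈ Finset.range j, c i := by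
  intro j
  induction j with
  | zero => simp
  | succ j ih =>
    intro hj k
    have hprev := ih (by omega) (k + 1)
    rw [show k + 1 + j = k + (j + 1) by omega] at hprev
    calc |g 0 (k + (j + 1)) - g (j + 1) k|
        ≤ |g 0 (k + (j + 1)) - g j (k + 1)| + |g j (k + 1) - g (j + 1) k| :=
          abs_sub_le _ _ _
      _ ≤ (∑ i ∈ Finset.range j, c i) + c j := add_le_add hprev (h j (by omega) k)
      _ = ∑ i ∈ Finset.range (j + 1), c i := (Finset.sum_range_succ c j).symm

theorem abs_sub_le_of_pullback_eq {X DivX DivC : Type*} {C : Set (X × X)}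
    {xstar ystar : DivX → DivC} {lamX : DivX → X → ℝ} {lamC : DivC → C → ℝ}
    {E F : DivX} {cy cx : ℝ}
    (hy : ∀ Q : C, |lamC (ystar E) Q - lamX E (Q : X × X).2| ≤ cy)
    (hx : ∀ Q : C, |lamC (xstar F) Q - lamX F (Q : X × X).1| ≤ cx)
    (hEF : ystar E = xstar F) (Q : C) :
    |lamX E (Q : X × X).2 - lamX F (Q : X × X).1| ≤ cy + cx := by
  have hy' := hy Q
  rw [hEF] at hy'
  calc |lamX E (Q : X × X).2 - lamX F (Q : X × X).1|
      ≤ |lamX E (Q : X × X).2 - lamC (xstar F) Q| + |lamC (xstar F) Q - lamX F (Q : X × X).1| :=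
        abs_sub_le _ _ _
    _ ≤ cy + cx := add_le_add (by rwa [abs_sub_comm]) (hx Q)

theorem stmt_15 {X V DivX DivC : Type*} (C : Set (X × X))
    (xstar ystar : DivX → DivC)
    (lamX : V → DivX → X → ℝ) (lamC : V → DivC → C → ℝ)
    (hxfun : ∀ (v : V) (E : DivX), ∃ c : ℝ, ∀ Q : C,
      |lamC v (xstar E) Q - lamX v E ((Q : X × X).1)| ≤ c)
    (hyfun : ∀ (v : V) (E : DivX), ∃ c : ℝ, ∀ Q : C,
      |lamC v (ystar E) Q - lamX v E ((Q : X × X).2)| ≤ c)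
    (m : ℕ) (D Dm : DivX) (L : ℕ → DivX) (hL0 : L 0 = D) (hLm : L m = Dm)
    (hCIP : ∀ i, 1 ≤ i → i ≤ m → ystar (L (i - 1)) = xstar (L i))
    (v : V) :
    ∃ c : ℝ, ∀ n : ℕ, m ≤ n → ∀ Q : PathSpace C,
      |lamX v D (((pathShift C)^[n] Q).1 0)
        - lamX v Dm (((pathShift C)^[n - m] Q).1 0)| ≤ c := by
  choose cx hcx using hxfun v
  choose cy hcy using hyfun v
  refine ⟨∑ i ∈ Finset.range m, (cy (L i) + cx (L (i + 1))), fun n hn Q => ?_⟩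
  have hstep : ∀ i < m, ∀ k, |lamX v (L i) (Q.1 (k + 1)) - lamX v (L (i + 1)) (Q.1 k)| ≤
      cy (L i) + cx (L (i + 1)) := fun i hi k =>
    abs_sub_le_of_pullback_eq (hcy (L i)) (hcx (L (i + 1)))
      (hCIP (i + 1) (by omega) (by omega)) ⟨(Q.1 k, Q.1 (k + 1)), Q.2 k⟩
  have htele := abs_sub_le_sum_of_abs_sub_succ_le (g := fun i k => lamX v (L i) (Q.1 k))
    hstep m le_rfl (n - m)
  rw [Nat.sub_add_cancel hn, hL0, hLm] at htele
  simpa only [pathShift_iterate_apply, zero_add] using htele
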